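/- arXiv:math/0408146 — 3 statements merged into one kernel-verified Lean document; each statement's English description precedes it below -/
import Mathlib

section
/- For a finite-horizon POMDP with final-stage reward, the belief-state dynamic programming recursion is correct: defining W_T(b) = max_{x_T} Σ_{y_T,z_T} b(z_T) p(y_T|z_T) V_T(x_T,y_T,z_T), the (unnormalized) belief update β_{t+1}(z_{t+1}|x_t,y_t,b_t) = Σ_{z_t} b_t(z_t) p(y_t|z_t) p(z_{t+1}|z_t,x_t), and W_t(b_t) = max_{x_t} Σ_{y_t} W_{t+1}(β_{t+1}(·|x_t,y_t,b_t)), the maximal expected final reward over all observation-dependent decision trees x_t(y_{1:t-1}) equals max_{x_1} Σ_{y_1} W_2(β_2(·|x_1,y_1)) where β_2(z_2|x_1,y_1) = Σ_{z_1} p(z_1) p(y_1|z_1) p(z_2|z_1,x_1). -/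
/-!
Cutting a decision tree into its first action `x₁` and the subtrees that follow each first
observation `y₁`, and summing out the first hidden state, writes the value of a tree from the
belief `b` as the sum over `y₁` of the values of the subtrees from the updated beliefs
`β(·|x₁, y₁, b)`. The subtrees can be chosen independently for each `y₁`, so the supremum of that
sum is the sum of the suprema, and induction on the horizon identifies the optimal value with the
backward recursion for `W`.
-/

open Finset

/-- The prefix of a trajectory of length `T`. -/
def pre {T : ℕ} {α : Type*} (t : Fin T) (f : Fin T → α) : Fin t → α :=
  fun i => f ⟨i.1, i.isLt.trans t.isLt⟩

/-- Joint probability of the observation/state trajectory `(y, z)` under a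
decision tree `π` (the action at stage `t` is a function of `y_{1:t-1}`):
`Π_t p(y_t|z_t) p(z_t|z_{t-1}, x_{t-1}(y_{1:t-2}))`. -/
def pomdpTrajProb {X Y Z : Type*} [Fintype X] [Fintype Y] [Fintype Z]
    (T : ℕ) (p1 : Z → ℝ) (pt : Z → X → Z → ℝ) (po : Z → Y → ℝ)
    (π : (t : Fin T) → (Fin t → Y) → X) (y : Fin T → Y) (z : Fin T → Z) : ℝ :=
  ∏ t : Fin T,
    po (z t) (y t) *
      (if h : t.1 = 0 then p1 (z t)
       else
         pt (z ⟨t.1 - 1, lt_of_le_of_lt (Nat.sub_le _ _) t.isLt⟩)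
           (π ⟨t.1 - 1, lt_of_le_of_lt (Nat.sub_le _ _) t.isLt⟩
             (pre ⟨t.1 - 1, lt_of_le_of_lt (Nat.sub_le _ _) t.isLt⟩ y))
           (z t))

/-- Expected final reward `E[V_T(x_T, y_T, z_T)]` of a decision tree. -/
def pomdpValue {X Y Z : Type*} [Fintype X] [Fintype Y] [Fintype Z]
    (T : ℕ) (hT : 0 < T) (p1 : Z → ℝ) (pt : Z → X → Z → ℝ) (po : Z → Y → ℝ)
    (VT : X → Y → Z → ℝ) (π : (t : Fin T) → (Fin t → Y) → X) : ℝ :=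
  ∑ y : Fin T → Y, ∑ z : Fin T → Z,
    VT (π ⟨T - 1, Nat.sub_lt hT one_pos⟩ (pre ⟨T - 1, Nat.sub_lt hT one_pos⟩ y))
        (y ⟨T - 1, Nat.sub_lt hT one_pos⟩) (z ⟨T - 1, Nat.sub_lt hT one_pos⟩) *
      pomdpTrajProb T p1 pt po π y z

/-- The unnormalized belief update
`β(z'|x, y, b) = Σ_z b(z) p(y|z) p(z'|z,x)`. -/
def beliefUpdate {X Y Z : Type*} [Fintype Z] (pt : Z → X → Z → ℝ)
    (po : Z → Y → ℝ) (x : X) (y : Y) (b : Z → ℝ) : Z → ℝ :=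
  fun z' => ∑ z : Z, b z * po z y * pt z x z'

theorem Finset.sum_sup'_univ_eq_sup'_sum {ι β M : Type*} [Fintype ι] [DecidableEq ι]
    [Fintype β] [Nonempty β] [AddCommMonoid M] [LinearOrder M] [IsOrderedAddMonoid M]
    (g : ι → β → M) :
    ∑ i, univ.sup' univ_nonempty (g i)
      = univ.sup' univ_nonempty (fun f : ι → β => ∑ i, g i (f i)) := by
  refine le_antisymm ?_ (sup'_le _ _ fun f _ => sum_le_sum fun i _ => le_sup' (g i) (mem_univ _))
  choose f hf using fun i => exists_mem_eq_sup' univ_nonempty (g i)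
  calc ∑ i, univ.sup' univ_nonempty (g i) = ∑ i, g i (f i) := sum_congr rfl fun i _ => (hf i).2
    _ ≤ _ := le_sup' (fun f : ι → β => ∑ i, g i (f i)) (mem_univ f)

theorem Fintype.sum_pi_fin_succ {n : ℕ} {α M : Type*} [Fintype α] [AddCommMonoid M]
    (g : (Fin (n + 1) → α) → M) :
    ∑ f, g f = ∑ a, ∑ f : Fin n → α, g (Fin.cons a f) := by
  rw [← (Fin.consEquiv fun _ => α).sum_comp, Fintype.sum_prod_type]
  rfl

theorem pre_succ_cons {T : ℕ} {α : Type*} (t : Fin T) (a : α) (f : Fin T → α) :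
    pre t.succ (Fin.cons a f) = Fin.cons a (pre t f) := by
  funext ⟨i, hi⟩
  cases i <;> rfl

abbrev DecisionTree (X Y : Type*) (T : ℕ) : Type _ := (t : Fin T) → (Fin t → Y) → X

namespace DecisionTree

variable {X Y : Type*} {T : ℕ}

def root (π : DecisionTree X Y (T + 1)) : X := π 0 Fin.elim0

def tail (π : DecisionTree X Y (T + 1)) (y₁ : Y) : DecisionTree X Y T :=
  fun t h => π t.succ (Fin.cons y₁ h)

def cons (x : X) (F : Y → DecisionTree X Y T) : DecisionTree X Y (T + 1) :=
  fun t h =>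
    if h0 : t.1 = 0 then x
    else F (h ⟨0, Nat.pos_of_ne_zero h0⟩) ⟨t.1 - 1, by omega⟩
      (fun i : Fin (t.1 - 1) => h ⟨i.1 + 1, by omega⟩)

@[simp]
theorem root_cons (x : X) (F : Y → DecisionTree X Y T) : (cons x F).root = x := rfl

@[simp]
theorem tail_cons (x : X) (F : Y → DecisionTree X Y T) (y₁ : Y) : (cons x F).tail y₁ = F y₁ := by
  funext t h
  simp only [tail, cons, Fin.val_succ, Nat.add_one_ne_zero, ↓reduceDIte]
  rfl

end DecisionTree

section Trajectories

variable {X Y Z : Type*} [Fintype X] [Fintype Y] [Fintype Z]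
  (pt : Z → X → Z → ℝ) (po : Z → Y → ℝ) (VT : X → Y → Z → ℝ)

theorem pomdpTrajProb_eq_init_mul {T : ℕ} (b : Z → ℝ) (π : DecisionTree X Y (T + 1))
    (y : Fin (T + 1) → Y) (z : Fin (T + 1) → Z) :
    pomdpTrajProb (T + 1) b pt po π y z
      = b (z 0) * pomdpTrajProb (T + 1) (fun _ => 1) pt po π y z := by
  simp only [pomdpTrajProb, Fin.prod_univ_succ, Fin.val_zero, ↓reduceDIte, Fin.val_succ,
    Nat.add_one_ne_zero]
  ring

theorem pomdpTrajProb_cons {T : ℕ} (b : Z → ℝ) (π : DecisionTree X Y (T + 1))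
    (y₁ : Y) (y : Fin T → Y) (z₁ : Z) (z : Fin T → Z) :
    pomdpTrajProb (T + 1) b pt po π (Fin.cons y₁ y) (Fin.cons z₁ z)
      = po z₁ y₁ * b z₁ * pomdpTrajProb T (pt z₁ π.root) pt po (π.tail y₁) y z := by
  simp only [pomdpTrajProb, Fin.prod_univ_succ, Fin.cons_zero, Fin.cons_succ, Fin.val_zero,
    ↓reduceDIte, Fin.val_succ, Nat.add_one_ne_zero]
  congr 1
  refine prod_congr rfl fun ⟨t, ht⟩ _ => ?_
  congr 1
  cases t with
  | zero =>
    simp only [↓reduceDIte, DecisionTree.root]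
    exact congrArg (fun h => pt z₁ (π 0 h) (z ⟨0, ht⟩)) (Subsingleton.elim (α := Fin 0 → Y) _ _)
  | succ j =>
    simp only [Nat.add_one_ne_zero, ↓reduceDIte, DecisionTree.tail]
    rw [← pre_succ_cons]
    rfl

theorem sum_pomdpTrajProb_cons {T : ℕ} (b : Z → ℝ) (π : DecisionTree X Y (T + 2))
    (y₁ : Y) (y : Fin (T + 1) → Y) (z : Fin (T + 1) → Z) :
    ∑ z₁, pomdpTrajProb (T + 2) b pt po π (Fin.cons y₁ y) (Fin.cons z₁ z)
      = pomdpTrajProb (T + 1) (beliefUpdate pt po π.root y₁ b) pt po (π.tail y₁) y z := by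
  simp only [pomdpTrajProb_cons, pomdpTrajProb_eq_init_mul _ _ (pt _ _),
    pomdpTrajProb_eq_init_mul _ _ (beliefUpdate _ _ _ _ _), beliefUpdate, sum_mul]
  exact sum_congr rfl fun _ _ => by ring

theorem pomdpValue_one (b : Z → ℝ) (π : DecisionTree X Y 1) :
    pomdpValue 1 one_pos b pt po VT π = ∑ y₁, ∑ z₁, b z₁ * po z₁ y₁ * VT π.root y₁ z₁ := by
  simp only [pomdpValue, pomdpTrajProb, Fintype.sum_pi_fin_succ, Fintype.sum_unique,
    Fin.prod_univ_one, Fin.val_zero, ↓reduceDIte, Fin.cons_zero]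
  refine sum_congr rfl fun y₁ _ => sum_congr rfl fun z₁ _ => ?_
  rw [mul_comm, mul_comm (po _ _)]
  congr 2
  exact congrArg (π 0) (Subsingleton.elim (α := Fin 0 → Y) _ _)

theorem pomdpValue_add_two {T : ℕ} (b : Z → ℝ) (π : DecisionTree X Y (T + 2)) :
    pomdpValue (T + 2) (by omega) b pt po VT π
      = ∑ y₁, pomdpValue (T + 1) (by omega) (beliefUpdate pt po π.root y₁ b) pt po VT
          (π.tail y₁) := by
  simp only [pomdpValue, Fintype.sum_pi_fin_succ (n := T + 1)]
  refine sum_congr rfl fun y₁ _ => sum_congr rfl fun y _ => ?_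
  rw [sum_comm]
  refine sum_congr rfl fun z _ => ?_
  rw [← sum_pomdpTrajProb_cons, mul_sum]
  refine sum_congr rfl fun z₁ _ => ?_
  simp only [DecisionTree.tail, ← pre_succ_cons]
  rfl

end Trajectories

section DynamicProgramming

variable {X Y Z : Type*} [Fintype X] [Fintype Y] [Fintype Z] [Nonempty X]
  (pt : Z → X → Z → ℝ) (po : Z → Y → ℝ) (VT : X → Y → Z → ℝ)

/-- `beliefValue k` is the paper's `W_{T-k}`: the value of a belief with `k + 1` decisions left. -/
noncomputable def beliefValue : ℕ → (Z → ℝ) → ℝ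
  | 0, b => univ.sup' univ_nonempty fun x : X => ∑ y : Y, ∑ z, b z * po z y * VT x y z
  | k + 1, b => univ.sup' univ_nonempty fun x : X =>
      ∑ y : Y, beliefValue k (beliefUpdate pt po x y b)

variable [DecidableEq Y]

theorem sup_pomdpValue_one (b : Z → ℝ) :
    univ.sup' univ_nonempty (fun π : DecisionTree X Y 1 => pomdpValue 1 one_pos b pt po VT π)
      = beliefValue pt po VT 0 b := by
  refine le_antisymm (sup'_le _ _ fun π _ => ?_) (sup'_le _ _ fun x _ => ?_)
  · rw [pomdpValue_one]
    exact le_sup'_of_le _ (mem_univ π.root) le_rfl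
  · exact le_sup'_of_le _ (mem_univ fun _ _ => x) (pomdpValue_one pt po VT b fun _ _ => x).ge

theorem sup_pomdpValue_add_two {T : ℕ} (b : Z → ℝ) :
    univ.sup' univ_nonempty
        (fun π : DecisionTree X Y (T + 2) => pomdpValue (T + 2) (by omega) b pt po VT π)
      = univ.sup' univ_nonempty fun x : X => ∑ y,
          univ.sup' univ_nonempty fun π : DecisionTree X Y (T + 1) =>
            pomdpValue (T + 1) (by omega) (beliefUpdate pt po x y b) pt po VT π := by
  refine le_antisymm (sup'_le _ _ fun π _ => ?_) (sup'_le _ _ fun x _ => ?_)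
  · rw [pomdpValue_add_two]
    exact le_sup'_of_le _ (mem_univ π.root)
      (sum_le_sum fun y _ => le_sup'_of_le _ (mem_univ (π.tail y)) le_rfl)
  · rw [sum_sup'_univ_eq_sup'_sum]
    refine sup'_le _ _ fun F _ => le_sup'_of_le _ (mem_univ (.cons x F)) ?_
    rw [pomdpValue_add_two, DecisionTree.root_cons]
    simp only [DecisionTree.tail_cons, le_refl]

theorem sup_pomdpValue_eq_beliefValue (k : ℕ) (b : Z → ℝ) :
    univ.sup' univ_nonempty
        (fun π : DecisionTree X Y (k + 1) => pomdpValue (k + 1) k.succ_pos b pt po VT π)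
      = beliefValue pt po VT k b := by
  induction k generalizing b with
  | zero => exact sup_pomdpValue_one pt po VT b
  | succ k ih =>
    rw [sup_pomdpValue_add_two, beliefValue]
    simp only [ih]

end DynamicProgramming

theorem pomdp_belief_dynamic_programming_general {X Y Z : Type*}
    [Fintype X] [Fintype Y] [Fintype Z] [Nonempty X]
    [DecidableEq Y]
    (T : ℕ) (hT : 2 ≤ T)
    (p1 : Z → ℝ) (pt : Z → X → Z → ℝ) (po : Z → Y → ℝ) (VT : X → Y → Z → ℝ)
    (W : ℕ → (Z → ℝ) → ℝ)
    (hWT : ∀ b : Z → ℝ, W T b = univ.sup' univ_nonempty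
      (fun x : X => ∑ y : Y, ∑ z : Z, b z * po z y * VT x y z))
    (hWrec : ∀ t, 2 ≤ t → t < T → ∀ b : Z → ℝ,
      W t b = univ.sup' univ_nonempty
        (fun x : X => ∑ y : Y, W (t + 1) (beliefUpdate pt po x y b))) :
    univ.sup' univ_nonempty
        (fun π : (t : Fin T) → (Fin t → Y) → X =>
          pomdpValue T (lt_of_lt_of_le two_pos hT) p1 pt po VT π)
      = univ.sup' univ_nonempty
          (fun x1 : X => ∑ y1 : Y, W 2 (beliefUpdate pt po x1 y1 p1)) := by
  obtain ⟨K, rfl⟩ : ∃ K, T = K + 2 := ⟨T - 2, by omega⟩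
  have hW : ∀ j ≤ K, ∀ b, W (K + 2 - j) b = beliefValue pt po VT j b := by
    intro j
    induction j with
    | zero => exact fun _ b => hWT b
    | succ j ih =>
      intro hj b
      rw [hWrec _ (by omega) (by omega), beliefValue,
        show K + 2 - (j + 1) + 1 = K + 2 - j by omega]
      simp only [ih (by omega)]
  rw [sup_pomdpValue_eq_beliefValue pt po VT (K + 1) p1, beliefValue]
  simp only [← hW K le_rfl, show K + 2 - K = 2 by omega]

/-- Correctness of the belief-state dynamic programming
recursion for the finite-horizon POMDP with final-stage reward. -/
theorem pomdp_belief_dynamic_programming {X Y Z : Type*}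
    [Fintype X] [Fintype Y] [Fintype Z] [Nonempty X] [Nonempty Y] [Nonempty Z]
    [DecidableEq X] [DecidableEq Y] [DecidableEq Z]
    (T : ℕ) (hT : 2 ≤ T)
    (p1 : Z → ℝ) (pt : Z → X → Z → ℝ) (po : Z → Y → ℝ) (VT : X → Y → Z → ℝ)
    (hp1 : ∀ z, 0 ≤ p1 z) (hp1sum : ∑ z, p1 z = 1)
    (hpt : ∀ z x z', 0 ≤ pt z x z') (hptsum : ∀ z x, ∑ z', pt z x z' = 1)
    (hpo : ∀ z y, 0 ≤ po z y) (hposum : ∀ z, ∑ y, po z y = 1)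
    (W : ℕ → (Z → ℝ) → ℝ)
    (hWT : ∀ b : Z → ℝ, W T b = univ.sup' univ_nonempty
      (fun x : X => ∑ y : Y, ∑ z : Z, b z * po z y * VT x y z))
    (hWrec : ∀ t, 2 ≤ t → t < T → ∀ b : Z → ℝ,
      W t b = univ.sup' univ_nonempty
        (fun x : X => ∑ y : Y, W (t + 1) (beliefUpdate pt po x y b))) :
    univ.sup' univ_nonempty
        (fun π : (t : Fin T) → (Fin t → Y) → X =>
          pomdpValue T (lt_of_lt_of_le two_pos hT) p1 pt po VT π)
      = univ.sup' univ_nonempty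
          (fun x1 : X => ∑ y1 : Y, W 2 (beliefUpdate pt po x1 y1 p1)) :=
  pomdp_belief_dynamic_programming_general T hT p1 pt po VT W hWT hWrec
end

section
/- If the belief-value function W_{t+1} is piecewise linear convex (a finite maximum of linear functionals of the belief), then so is W_t(b) = max_{x} Σ_{y} W_{t+1}(β(·|x,y,b)), where β(z'|x,y,b) = Σ_z b(z) p(y|z) p(z'|z,x) is linear in b. Hence by backward induction every W_t in the POMDP value recursion is piecewise linear convex. -/
open Finset

/-- The POMDP dynamic programming step preserves piecewise
linear convexity: if `W_{t+1}` is a finite maximum of linear functionals of the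
belief, then so is `W_t(b) = max_x Σ_y W_{t+1}(β(·|x,y,b))`. -/
theorem dp_step_preserves_piecewise_linear_convex {X Y Z : Type*}
    [Fintype X] [Fintype Y] [Fintype Z] [Nonempty X]
    (pt : Z → X → Z → ℝ) (po : Z → Y → ℝ)
    (hpt : ∀ z x z', 0 ≤ pt z x z') (hpo : ∀ z y, 0 ≤ po z y)
    (Wnext : (Z → ℝ) → ℝ)
    (hWnext : ∃ (s : Finset (Z → ℝ)) (hs : s.Nonempty),
      ∀ b : Z → ℝ, (∀ z, 0 ≤ b z) →
        Wnext b = s.sup' hs (fun c => ∑ z : Z, c z * b z)) :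
    ∃ (s' : Finset (Z → ℝ)) (hs' : s'.Nonempty),
      ∀ b : Z → ℝ, (∀ z, 0 ≤ b z) →
        univ.sup' univ_nonempty
            (fun x : X => ∑ y : Y, Wnext (beliefUpdate pt po x y b))
          = s'.sup' hs' (fun c => ∑ z : Z, c z * b z) := by
  classical
  obtain ⟨s, hs, hW⟩ := hWnext
  have hsne : Nonempty {c // c ∈ s} := ⟨⟨hs.choose, hs.choose_spec⟩⟩
  refine ⟨Finset.image (fun p : X × (Y → {c // c ∈ s}) =>
      fun z => ∑ y : Y, ∑ z' : Z, (p.2 y).1 z' * po z y * pt z p.1 z') univ,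
    Finset.Nonempty.image univ_nonempty _, ?_⟩
  intro b hb
  have hβ : ∀ x y z', 0 ≤ beliefUpdate pt po x y b z' := by
    intro x y z'
    exact Finset.sum_nonneg fun z _ =>
      mul_nonneg (mul_nonneg (hb z) (hpo z y)) (hpt z x z')
  -- abbreviation
  set A : X → Y → (Z → ℝ) → ℝ :=
    fun x y c => ∑ z' : Z, c z' * beliefUpdate pt po x y b z' with hA
  have hWβ : ∀ x y, Wnext (beliefUpdate pt po x y b) = s.sup' hs (A x y) := by
    intro x y; exact hW _ (hβ x y)
  have key : ∀ (x : X) (g : Y → {c // c ∈ s}),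
      (∑ z : Z, (∑ y : Y, ∑ z' : Z, (g y).1 z' * po z y * pt z x z') * b z)
        = ∑ y : Y, A x y (g y).1 := by
    intro x g
    simp only [hA, beliefUpdate, Finset.sum_mul, Finset.mul_sum]
    rw [Finset.sum_comm]
    refine Finset.sum_congr rfl fun y _ => ?_
    rw [Finset.sum_comm]
    exact Finset.sum_congr rfl fun z' _ => Finset.sum_congr rfl fun z _ => by ring
  rw [Finset.sup'_image]
  simp only [Function.comp]
  apply le_antisymm
  · apply Finset.sup'_le
    intro x _
    simp only [hWβ]
    choose g hg hgeq using fun y => Finset.exists_mem_eq_sup' hs (A x y)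
    have := Finset.le_sup' (f := fun p : X × (Y → {c // c ∈ s}) =>
        ∑ z : Z, (∑ y : Y, ∑ z' : Z, (p.2 y).1 z' * po z y * pt z p.1 z') * b z)
      (Finset.mem_univ (x, fun y => (⟨g y, hg y⟩ : {c // c ∈ s})))
    refine le_trans ?_ this
    rw [key]
    exact le_of_eq (Finset.sum_congr rfl fun y _ => hgeq y)
  · apply Finset.sup'_le
    rintro ⟨x, g⟩ _
    rw [key]
    have h1 : ∑ y : Y, A x y (g y).1 ≤ ∑ y : Y, Wnext (beliefUpdate pt po x y b) := by
      refine Finset.sum_le_sum fun y _ => ?_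
      rw [hWβ]
      exact Finset.le_sup' (A x y) (g y).2
    exact le_trans h1 (Finset.le_sup'
      (fun x : X => ∑ y : Y, Wnext (beliefUpdate pt po x y b)) (Finset.mem_univ x))
end

section
/- Idealized CE iteration with full expressive family converges to the set of maximizers in finitely many steps on a finite space: starting from any strictly positive law P_0 on finite Θ and iterating P_{k+1} = P_k(· | f ≥ γ_k) where γ_k is the (1-ρ)-quantile of f under P_k, the support of P_k is nonincreasing, the quantile γ_k is nondecreasing, and after at most |f(Θ)| iterations the support of P_k is contained in a level set on which the iteration is stationary; if additionally ρ is smaller than the P_k-mass of the top level set at each step where the top value is in the support, the limit support is exactly argmax f. -/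
open Finset

/-- The `(1-ρ)`-quantile of `f` under the law `P` on a finite space:
`γ(P) = max {c ∈ f(Θ) : P(f ≥ c) ≥ ρ}`. -/
noncomputable def ceQuantile {Θ : Type*} [Fintype Θ] (f : Θ → ℝ) (ρ : ℝ)
    (P : Θ → ℝ) : ℝ :=
  sSup {c : ℝ | (∃ θ, f θ = c) ∧
    ρ ≤ ∑ θ ∈ univ.filter (fun θ => c ≤ f θ), P θ}

/-- The idealized (infinite-sample, fully expressive) CE update: the
conditioning of `P` on the event `{f ≥ γ(P)}`. -/
noncomputable def ceUpdate {Θ : Type*} [Fintype Θ] (f : Θ → ℝ) (ρ : ℝ)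
    (P : Θ → ℝ) : Θ → ℝ :=
  fun θ =>
    if ceQuantile f ρ P ≤ f θ then
      P θ / ∑ θ' ∈ univ.filter (fun θ' => ceQuantile f ρ P ≤ f θ'), P θ'
    else 0

section CEaux

variable {Θ : Type*} [Fintype Θ] [Nonempty Θ]

/-- The set whose supremum defines the quantile. -/
def ceQset (f : Θ → ℝ) (ρ : ℝ) (P : Θ → ℝ) : Set ℝ :=
  {c : ℝ | (∃ θ, f θ = c) ∧ ρ ≤ ∑ θ ∈ univ.filter (fun θ => c ≤ f θ), P θ}

omit [Nonempty Θ] in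
lemma ceQset_finite (f : Θ → ℝ) (ρ : ℝ) (P : Θ → ℝ) : (ceQset f ρ P).Finite := by
  apply (Finset.finite_toSet (univ.image f)).subset
  rintro c ⟨⟨θ, hθ⟩, -⟩
  simp only [Finset.coe_image, Set.mem_image, Finset.mem_coe, Finset.mem_univ]
  exact ⟨θ, trivial, hθ⟩

omit [Nonempty Θ] in
lemma le_ceQuantile (f : Θ → ℝ) (ρ : ℝ) (P : Θ → ℝ) {c : ℝ}
    (hc : c ∈ ceQset f ρ P) : c ≤ ceQuantile f ρ P :=
  le_csSup (ceQset_finite f ρ P).bddAbove hc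

lemma ceQuantile_mem (f : Θ → ℝ) {ρ : ℝ} (hρ1 : ρ ≤ 1) (P : Θ → ℝ)
    (h1 : ∑ θ, P θ = 1) : ceQuantile f ρ P ∈ ceQset f ρ P := by
  have hne : (ceQset f ρ P).Nonempty := by
    obtain ⟨θ₀, -, hθ₀⟩ := Finset.exists_min_image univ f ⟨Classical.arbitrary Θ,
      Finset.mem_univ _⟩
    refine ⟨f θ₀, ⟨θ₀, rfl⟩, ?_⟩
    have h : univ.filter (fun θ => f θ₀ ≤ f θ) = univ := by
      apply Finset.filter_true_of_mem
      intro θ _; exact hθ₀ θ (by simp)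
    rw [h, h1]; exact hρ1
  exact Set.Nonempty.csSup_mem hne (ceQset_finite f ρ P)

/-- The single-step bundle. -/
lemma ceStep (f : Θ → ℝ) {ρ : ℝ} (hρ0 : 0 < ρ) (hρ1 : ρ ≤ 1) (P : Θ → ℝ)
    (h0 : ∀ θ, 0 ≤ P θ) (h1 : ∑ θ, P θ = 1) :
    (∀ θ, 0 ≤ ceUpdate f ρ P θ) ∧ (∑ θ, ceUpdate f ρ P θ = 1) ∧
    (∀ θ, ceUpdate f ρ P θ ≠ 0 ↔ (P θ ≠ 0 ∧ ceQuantile f ρ P ≤ f θ)) ∧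
    ceQuantile f ρ P ≤ ceQuantile f ρ (ceUpdate f ρ P) := by
  set γ := ceQuantile f ρ P with hγ
  set Z := ∑ θ' ∈ univ.filter (fun θ' => γ ≤ f θ'), P θ' with hZ
  have hmem := ceQuantile_mem f hρ1 P h1
  have hZpos : 0 < Z := lt_of_lt_of_le hρ0 hmem.2
  have hupd : ∀ θ, ceUpdate f ρ P θ = if γ ≤ f θ then P θ / Z else 0 := fun θ => rfl
  have hsumfilter : ∑ θ ∈ univ.filter (fun θ => γ ≤ f θ), ceUpdate f ρ P θ = 1 := by
    have : ∑ θ ∈ univ.filter (fun θ => γ ≤ f θ), ceUpdate f ρ P θ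
        = ∑ θ ∈ univ.filter (fun θ => γ ≤ f θ), P θ / Z := by
      apply Finset.sum_congr rfl
      intro θ hθ
      rw [hupd θ, if_pos (Finset.mem_filter.mp hθ).2]
    rw [this, ← Finset.sum_div, ← hZ, div_self hZpos.ne']
  refine ⟨?_, ?_, ?_, ?_⟩
  · intro θ; rw [hupd θ]
    split
    · exact div_nonneg (h0 θ) hZpos.le
    · exact le_refl 0
  · rw [← hsumfilter]
    symm
    apply Finset.sum_filter_of_ne
    intro θ _ hne
    by_contra h
    exact hne (by rw [hupd θ, if_neg h])
  · intro θ
    rw [hupd θ]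
    by_cases h : γ ≤ f θ
    · rw [if_pos h]
      simp [div_ne_zero_iff, hZpos.ne', h]
    · rw [if_neg h]
      simp [h]
  · apply le_ceQuantile
    exact ⟨hmem.1, by rw [hsumfilter]; exact hρ1⟩

omit [Nonempty Θ] in
lemma ceStationary (f : Θ → ℝ) {ρ : ℝ} (P : Θ → ℝ)
    (h1 : ∑ θ, P θ = 1)
    (hsupp : ∀ θ, P θ ≠ 0 → ceQuantile f ρ P ≤ f θ) :
    ceUpdate f ρ P = P := by
  have hZ : ∑ θ' ∈ univ.filter (fun θ' => ceQuantile f ρ P ≤ f θ'), P θ' = 1 := by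
    rw [Finset.sum_filter_of_ne (fun θ _ h => hsupp θ h)]
    exact h1
  funext θ
  show (if ceQuantile f ρ P ≤ f θ then P θ / _ else 0) = P θ
  rw [hZ]
  by_cases h : ceQuantile f ρ P ≤ f θ
  · rw [if_pos h, div_one]
  · rw [if_neg h]
    by_contra hne
    exact h (hsupp θ (fun he => hne he.symm))

end CEaux

/-- Idealized CE iteration on a finite space: the support of
the iterates is nonincreasing, the quantile is nondecreasing, after at most
`|f(Θ)|` iterations the iteration is stationary (the support is contained in
the level set `{f ≥ γ}` on which conditioning acts trivially), and if `ρ` does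
not exceed the current mass of the top level set whenever the top value is in
the support, the limit support is exactly `argmax f`. -/
theorem ce_iteration_converges {Θ : Type*} [Fintype Θ] [Nonempty Θ]
    (f : Θ → ℝ) (ρ : ℝ) (hρ0 : 0 < ρ) (hρ1 : ρ < 1)
    (P : Θ → ℝ) (hP : ∀ θ, 0 < P θ) (hPsum : ∑ θ, P θ = 1)
    (Pseq : ℕ → Θ → ℝ) (hP0 : Pseq 0 = P)
    (hrec : ∀ k, Pseq (k + 1) = ceUpdate f ρ (Pseq k)) :
    (∀ k, {θ | Pseq (k + 1) θ ≠ 0} ⊆ {θ | Pseq k θ ≠ 0}) ∧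
    (∀ k, ceQuantile f ρ (Pseq k) ≤ ceQuantile f ρ (Pseq (k + 1))) ∧
    (∀ k, (univ.image f).card ≤ k →
      ({θ | Pseq k θ ≠ 0} ⊆ {θ | ceQuantile f ρ (Pseq k) ≤ f θ} ∧
        Pseq (k + 1) = Pseq k)) ∧
    ((∀ k, (∃ θ, Pseq k θ ≠ 0 ∧ ∀ θ', f θ' ≤ f θ) →
        ρ ≤ ∑ θ ∈ univ.filter (fun θ => ∀ θ', f θ' ≤ f θ), Pseq k θ) →
      ∃ K, ∀ k, K ≤ k → {θ | Pseq k θ ≠ 0} = {θ | ∀ θ', f θ' ≤ f θ}) := by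
  -- basic invariants
  have base : ∀ k, (∀ θ, 0 ≤ Pseq k θ) ∧ (∑ θ, Pseq k θ = 1) := by
    intro k
    induction k with
    | zero => exact ⟨fun θ => by rw [hP0]; exact (hP θ).le, by rw [hP0]; exact hPsum⟩
    | succ k ih =>
      rw [hrec k]
      obtain ⟨s1, s2, -, -⟩ := ceStep f hρ0 hρ1.le (Pseq k) ih.1 ih.2
      exact ⟨s1, s2⟩
  have step : ∀ k, (∀ θ, 0 ≤ ceUpdate f ρ (Pseq k) θ) ∧
      (∑ θ, ceUpdate f ρ (Pseq k) θ = 1) ∧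
      (∀ θ, ceUpdate f ρ (Pseq k) θ ≠ 0 ↔
        (Pseq k θ ≠ 0 ∧ ceQuantile f ρ (Pseq k) ≤ f θ)) ∧
      ceQuantile f ρ (Pseq k) ≤ ceQuantile f ρ (ceUpdate f ρ (Pseq k)) :=
    fun k => ceStep f hρ0 hρ1.le (Pseq k) (base k).1 (base k).2
  have hsuppiff : ∀ k θ, Pseq (k + 1) θ ≠ 0 ↔
      (Pseq k θ ≠ 0 ∧ ceQuantile f ρ (Pseq k) ≤ f θ) := by
    intro k θ; rw [hrec k]; exact (step k).2.2.1 θ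
  have hmono1 : ∀ k, ceQuantile f ρ (Pseq k) ≤ ceQuantile f ρ (Pseq (k + 1)) := by
    intro k; rw [hrec k]; exact (step k).2.2.2
  have hmono : ∀ j k, j ≤ k → ceQuantile f ρ (Pseq j) ≤ ceQuantile f ρ (Pseq k) := by
    intro j k hjk
    induction k with
    | zero => rw [Nat.le_zero.mp hjk]
    | succ k ih =>
      rcases Nat.lt_or_ge j (k + 1) with h | h
      · exact le_trans (ih (Nat.lt_succ_iff.mp h)) (hmono1 k)
      · rw [Nat.le_antisymm hjk h]
  -- stationarity from the support condition
  have hstat : ∀ k, (∀ θ, Pseq k θ ≠ 0 → ceQuantile f ρ (Pseq k) ≤ f θ) →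
      Pseq (k + 1) = Pseq k := by
    intro k hA
    rw [hrec k]
    exact ceStationary f (Pseq k) (base k).2 hA
  have hAstep : ∀ k, (∀ θ, Pseq k θ ≠ 0 → ceQuantile f ρ (Pseq k) ≤ f θ) →
      (∀ θ, Pseq (k + 1) θ ≠ 0 → ceQuantile f ρ (Pseq (k + 1)) ≤ f θ) := by
    intro k hA
    rw [hstat k hA]
    exact hA
  refine ⟨?_, hmono1, ?_, ?_⟩
  · intro k θ hθ
    exact ((hsuppiff k θ).mp hθ).1
  · -- after |f(Θ)| steps, stationary
    intro k hk
    set N := (univ.image f).card with hN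
    -- pigeonhole: two equal quantiles among γ_0, ..., γ_N
    have hmemim : ∀ j, ceQuantile f ρ (Pseq j) ∈ univ.image f := by
      intro j
      obtain ⟨θc, hθc⟩ := (ceQuantile_mem f hρ1.le (Pseq j) (base j).2).1
      exact Finset.mem_image.mpr ⟨θc, Finset.mem_univ θc, hθc⟩
    have hcard : Fintype.card ↥(univ.image f) < Fintype.card (Fin (N + 1)) := by
      simp [Fintype.card_coe, hN]
    obtain ⟨i, j, hij, heq⟩ := Fintype.exists_ne_map_eq_of_card_lt
      (fun i : Fin (N + 1) => (⟨ceQuantile f ρ (Pseq i), hmemim i⟩ :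
        ↥(univ.image f))) hcard
    have heq' : ceQuantile f ρ (Pseq i) = ceQuantile f ρ (Pseq j) :=
      congrArg Subtype.val heq
    -- wlog i < j
    have key : ∃ m : ℕ, m + 1 ≤ N ∧
        (∀ θ, Pseq (m + 1) θ ≠ 0 → ceQuantile f ρ (Pseq (m + 1)) ≤ f θ) := by
      have main : ∀ a b : Fin (N + 1), (a : ℕ) < (b : ℕ) →
          ceQuantile f ρ (Pseq a) = ceQuantile f ρ (Pseq b) →
          ∃ m : ℕ, m + 1 ≤ N ∧
            (∀ θ, Pseq (m + 1) θ ≠ 0 → ceQuantile f ρ (Pseq (m + 1)) ≤ f θ) := by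
        intro a b hab habeq
        refine ⟨(a : ℕ), ?_, ?_⟩
        · omega
        · have h1 : ceQuantile f ρ (Pseq a) = ceQuantile f ρ (Pseq ((a : ℕ) + 1)) :=
            le_antisymm (hmono1 a) (habeq ▸ hmono ((a : ℕ) + 1) b hab)
          intro θ hθ
          have := ((hsuppiff a θ).mp hθ).2
          rw [← h1]
          exact this
      have hne : (i : ℕ) ≠ (j : ℕ) := fun he => hij (Fin.ext he)
      rcases Nat.lt_or_ge (i : ℕ) (j : ℕ) with h | h
      · exact main i j h heq'
      · exact main j i (by omega) heq'.symm
    obtain ⟨m, hm, hAm⟩ := key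
    -- propagate A from m+1 to all k ≥ m+1
    have hAall : ∀ l, (∀ θ, Pseq (m + 1 + l) θ ≠ 0 →
        ceQuantile f ρ (Pseq (m + 1 + l)) ≤ f θ) := by
      intro l
      induction l with
      | zero => exact hAm
      | succ l ih => exact hAstep (m + 1 + l) ih
    have hAk : ∀ θ, Pseq k θ ≠ 0 → ceQuantile f ρ (Pseq k) ≤ f θ := by
      have hle : m + 1 ≤ k := le_trans hm hk
      obtain ⟨l, rfl⟩ := Nat.exists_eq_add_of_le hle
      exact hAall l
    exact ⟨fun θ hθ => hAk θ hθ, hstat k hAk⟩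
  · -- part 4
    intro H
    obtain ⟨θM, -, hθM⟩ := Finset.exists_max_image univ f
      ⟨Classical.arbitrary Θ, Finset.mem_univ _⟩
    have hθM' : ∀ θ', f θ' ≤ f θM := fun θ' => hθM θ' (Finset.mem_univ θ')
    -- the argmax set always intersects the support
    have hexmax : ∀ k, ∃ θ, Pseq k θ ≠ 0 ∧ ∀ θ', f θ' ≤ f θ := by
      intro k
      induction k with
      | zero => exact ⟨θM, by rw [hP0]; exact (hP θM).ne', hθM'⟩
      | succ k ih =>
        obtain ⟨θ, hθ, hmax⟩ := ih
        refine ⟨θ, ?_, hmax⟩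
        rw [hsuppiff k θ]
        refine ⟨hθ, ?_⟩
        obtain ⟨θc, hθc⟩ := (ceQuantile_mem f hρ1.le (Pseq k) (base k).2).1
        rw [← hθc]
        exact hmax θc
    -- under H, the quantile is the max value
    have hγeq : ∀ k, ceQuantile f ρ (Pseq k) = f θM := by
      intro k
      apply le_antisymm
      · obtain ⟨θc, hθc⟩ := (ceQuantile_mem f hρ1.le (Pseq k) (base k).2).1
        rw [← hθc]
        exact hθM' θc
      · apply le_ceQuantile
        refine ⟨⟨θM, rfl⟩, ?_⟩
        have hfilter : univ.filter (fun θ => f θM ≤ f θ)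
            = univ.filter (fun θ => ∀ θ', f θ' ≤ f θ) := by
          apply Finset.filter_congr
          intro θ _
          constructor
          · intro h θ'; exact le_trans (hθM' θ') h
          · intro h; exact h θM
        rw [hfilter]
        exact H k (hexmax k)
    -- every maximizer stays in the support
    have hsupmax : ∀ k θ, (∀ θ', f θ' ≤ f θ) → Pseq k θ ≠ 0 := by
      intro k
      induction k with
      | zero => intro θ _; rw [hP0]; exact (hP θ).ne'
      | succ k ih =>
        intro θ hmax
        rw [hsuppiff k θ]
        refine ⟨ih θ hmax, ?_⟩
        obtain ⟨θc, hθc⟩ := (ceQuantile_mem f hρ1.le (Pseq k) (base k).2).1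
        rw [← hθc]
        exact hmax θc
    refine ⟨1, ?_⟩
    intro k hk
    obtain ⟨l, rfl⟩ := Nat.exists_eq_add_of_le hk
    have hone : 1 + l = l + 1 := by omega
    rw [hone]
    ext θ
    simp only [Set.mem_setOf_eq]
    rw [hsuppiff l θ, hγeq l]
    constructor
    · rintro ⟨-, h⟩ θ'
      exact le_trans (hθM' θ') h
    · intro h
      exact ⟨hsupmax l θ h, h θM⟩
end
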